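/- Proposition A.2: let W : 𝕋^d → ℝ be continuous with W(−x) = W(x), given by the uniformly convergent cosine series W(x) = Σ_{k∈ℤ^d} a_k cos(2π k·x) with a_k = a_{−k}, a_0 = 0 (mean zero), and Σ_k |a_k| < ∞. Then the Haar probability measure on 𝕋^d is a global minimizer of the pairwise energy E over probability measures if and only if a_k ≥ 0 for all k ∈ ℤ^d. -/

import Mathlib

/-!
Writing `e_k(x) = exp(2πi k·x)` (`mFourier k`), one has `cos(2π k·(x - y)) = Re(e_k(x) conj e_k(y))`,
so integrating the absolutely convergent series for `W` term by term gives
`E(ρ) = ½ ∑_k a_k |ρ̂(k)|²` with `ρ̂(k) = ∫ e_k dρ`, for every finite measure `ρ`.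
Haar measure has `ρ̂(k) = 0` for `k ≠ 0`, so its energy is `½ a_0 = 0`, and if all `a_k ≥ 0` every
energy is nonnegative. Conversely, for `k ≠ 0` the probability density `1 + cos(2π k·x)` has Fourier
coefficients `1, ½, ½` at `0, k, -k` (distinct because `ℤ^d` is torsion-free), hence energy `a_k / 4`,
which must be `≥ 0` if Haar measure is a minimizer.
-/

open MeasureTheory Real
open scoped ENNReal

theorem cos2pi_periodic : Function.Periodic (fun t : ℝ => Real.cos (2 * Real.pi * t)) 1 := by
  intro x; simp [mul_add, Real.cos_add_two_pi]

theorem sin2pi_periodic : Function.Periodic (fun t : ℝ => Real.sin (2 * Real.pi * t)) 1 := by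
  intro x; simp [mul_add, Real.sin_add_two_pi]

/-- The function `x ↦ cos (2π x)` on the circle `ℝ/ℤ`. -/
noncomputable def cosA : AddCircle (1 : ℝ) → ℝ := cos2pi_periodic.lift

/-- The function `x ↦ sin (2π x)` on the circle `ℝ/ℤ`. -/
noncomputable def sinA : AddCircle (1 : ℝ) → ℝ := sin2pi_periodic.lift

/-- The `d`-dimensional torus `𝕋^d = ℝ^d/ℤ^d`, with its Haar probability measure `volume`. -/
abbrev Torus (d : ℕ) := Fin d → AddCircle (1 : ℝ)

/-- `cos (2π k·x)` for `k ∈ ℤ^d` and `x ∈ 𝕋^d`. -/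
noncomputable def tcos {d : ℕ} (k : Fin d → ℤ) (x : Torus d) : ℝ := cosA (∑ i, k i • x i)

/-- `sin (2π k·x)` for `k ∈ ℤ^d` and `x ∈ 𝕋^d`. -/
noncomputable def tsin {d : ℕ} (k : Fin d → ℤ) (x : Torus d) : ℝ := sinA (∑ i, k i • x i)

/-- The pairwise interaction energy `E(ρ) = (1/2) ∫∫ W(x - y) dρ(x) dρ(y)`. -/
noncomputable def energy {d : ℕ} (W : Torus d → ℝ) (ρ : Measure (Torus d)) : ℝ :=
  (1/2) * ∫ x, ∫ y, W (x - y) ∂ρ ∂ρ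

open UnitAddTorus ComplexConjugate

instance : IsProbabilityMeasure (volume : Measure (AddCircle (1 : ℝ))) :=
  ⟨by simp [AddCircle.measure_univ]⟩

lemma AddCircle.coe_toCircle_sum {T : ℝ} {ι : Type*} (s : Finset ι) (f : ι → AddCircle T) :
    (toCircle (∑ i ∈ s, f i) : ℂ) = ∏ i ∈ s, (toCircle (f i) : ℂ) := by
  classical
  induction s using Finset.induction_on with
  | empty => simp
  | insert i s hi ih =>
    rw [Finset.sum_insert hi, Finset.prod_insert hi, toCircle_add, Circle.coe_mul, ih]

lemma cosA_eq_re_toCircle (u : AddCircle (1 : ℝ)) : cosA u = (AddCircle.toCircle u : ℂ).re := by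
  induction u using QuotientAddGroup.induction_on with
  | H t =>
    rw [cosA, cos2pi_periodic.lift_coe, AddCircle.toCircle_apply_mk, Circle.coe_exp,
      Complex.exp_ofReal_mul_I_re, div_one]

lemma integral_fourier_unitAddCircle (n : ℤ) :
    ∫ u : AddCircle (1 : ℝ), fourier n u = if n = 0 then 1 else 0 := by
  split_ifs with h
  · simp [h]
  · exact integral_eq_zero_of_add_right_eq_neg (fourier_add_half_inv_index h one_pos)

lemma integral_tsum_mul_of_abs_le {α ι : Type*} [MeasurableSpace α] [Countable ι]
    {μ : Measure α} [IsFiniteMeasure μ] {a : ι → ℝ} (ha : Summable fun i => |a i|)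
    {f : ι → α → ℝ} (hf : ∀ i, AEStronglyMeasurable (f i) μ) {C : ℝ} (hC : ∀ i x, |f i x| ≤ C) :
    ∫ x, ∑' i, a i * f i x ∂μ = ∑' i, a i * ∫ x, f i x ∂μ := by
  have hbound : ∀ i x, ‖a i * f i x‖ ≤ |a i| * C := fun i x => by
    rw [Real.norm_eq_abs, abs_mul]
    exact mul_le_mul_of_nonneg_left (hC i x) (abs_nonneg _)
  have hint : ∀ i, Integrable (fun x => a i * f i x) μ := fun i =>
    (integrable_const (|a i| * C)).mono' ((hf i).const_mul (a i)) (ae_of_all _ (hbound i))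
  rw [← integral_tsum_of_summable_integral_norm hint]
  · simp_rw [integral_const_mul]
  · refine Summable.of_nonneg_of_le (fun i => integral_nonneg fun _ => norm_nonneg _)
      (fun i => ?_) (ha.mul_right (C * μ.real Set.univ))
    calc ∫ x, ‖a i * f i x‖ ∂μ ≤ ∫ _, |a i| * C ∂μ :=
          integral_mono (hint i).norm (integrable_const _) (hbound i)
      _ = |a i| * (C * μ.real Set.univ) := by rw [integral_const, smul_eq_mul]; ring

section Torus

variable {d : ℕ}

lemma tcos_eq_re_mFourier (k : Fin d → ℤ) (x : Torus d) : tcos k x = (mFourier k x).re := by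
  rw [tcos, cosA_eq_re_toCircle, AddCircle.coe_toCircle_sum]
  simp [mFourier, fourier_apply]

lemma ofReal_tcos (k : Fin d → ℤ) (x : Torus d) :
    (tcos k x : ℂ) = (mFourier k x + mFourier (-k) x) / 2 := by
  rw [tcos_eq_re_mFourier, mFourier_neg, Complex.re_eq_add_conj]

lemma mFourier_sub_apply (k : Fin d → ℤ) (x y : Torus d) :
    mFourier k (x - y) = mFourier k x * conj (mFourier k y) := by
  simp [mFourier, fourier_apply, map_prod, ← Finset.prod_mul_distrib, sub_eq_add_neg,
    AddCircle.toCircle_add]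

lemma norm_mFourier_apply (k : Fin d → ℤ) (x : Torus d) : ‖mFourier k x‖ = 1 := by
  simp [mFourier, fourier_apply, Circle.norm_coe]

lemma abs_tcos_le_one (k : Fin d → ℤ) (x : Torus d) : |tcos k x| ≤ 1 :=
  tcos_eq_re_mFourier k x ▸ (Complex.abs_re_le_norm _).trans (norm_mFourier_apply k x).le

lemma one_add_tcos_nonneg (k : Fin d → ℤ) (x : Torus d) : 0 ≤ 1 + tcos k x := by
  linarith [(abs_le.mp (abs_tcos_le_one k x)).1]

@[fun_prop]
lemma continuous_tcos (k : Fin d → ℤ) : Continuous (tcos k) := by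
  simp_rw [funext (tcos_eq_re_mFourier k)]
  exact Complex.continuous_re.comp (mFourier k).continuous

lemma integrable_mFourier (k : Fin d → ℤ) (ρ : Measure (Torus d)) [IsFiniteMeasure ρ] :
    Integrable (fun x => mFourier k x) ρ :=
  (mFourier k).continuous.integrable_of_hasCompactSupport (.of_compactSpace _)

lemma integral_mFourier (k : Fin d → ℤ) :
    ∫ x : Torus d, mFourier k x = if k = 0 then 1 else 0 := by
  simp only [mFourier, ContinuousMap.coe_mk]
  rw [volume_pi, integral_fintype_prod_eq_prod (f := fun i u => fourier (k i) u)]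
  simp_rw [integral_fourier_unitAddCircle]
  by_cases h : k = 0
  · simp [h]
  · obtain ⟨i, hi⟩ := Function.ne_iff.mp h
    rw [if_neg h]
    exact Finset.prod_eq_zero (Finset.mem_univ i) (if_neg hi)

lemma integral_tcos (k : Fin d → ℤ) : ∫ x : Torus d, tcos k x = if k = 0 then 1 else 0 := by
  simp_rw [tcos_eq_re_mFourier]
  refine (integral_re (integrable_mFourier k volume)).trans ?_
  rw [integral_mFourier]
  split_ifs <;> simp

section FiniteMeasure

variable (ρ : Measure (Torus d)) [IsFiniteMeasure ρ] (k : Fin d → ℤ)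

lemma norm_integral_mFourier_le : ‖∫ x, mFourier k x ∂ρ‖ ≤ ρ.real Set.univ :=
  (norm_integral_le_of_norm_le_const (C := 1)
    (ae_of_all _ fun x => (norm_mFourier_apply k x).le)).trans_eq (one_mul _)

lemma integral_tcos_sub (x : Torus d) :
    ∫ y, tcos k (x - y) ∂ρ = (mFourier k x * conj (∫ y, mFourier k y ∂ρ)).re := by
  have hint : Integrable (fun y => mFourier k x * conj (mFourier k y)) ρ :=
    ((mFourier k).continuous.star.integrable_of_hasCompactSupport (.of_compactSpace _)).const_mul _
  simp_rw [tcos_eq_re_mFourier, mFourier_sub_apply]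
  refine (integral_re hint).trans ?_
  rw [integral_const_mul, integral_conj]
  rfl

lemma integral_re_mul_conj_integral_mFourier :
    ∫ x, (mFourier k x * conj (∫ y, mFourier k y ∂ρ)).re ∂ρ = ‖∫ x, mFourier k x ∂ρ‖ ^ 2 := by
  refine (integral_re ((integrable_mFourier k ρ).mul_const _)).trans ?_
  rw [integral_mul_const, RCLike.re_to_complex, Complex.mul_conj, Complex.normSq_eq_norm_sq]
  norm_cast

end FiniteMeasure

theorem energy_eq_tsum {W : Torus d → ℝ} {a : (Fin d → ℤ) → ℝ} (ha : Summable fun k => |a k|)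
    (hW : ∀ x, W x = ∑' k, a k * tcos k x) (ρ : Measure (Torus d)) [IsFiniteMeasure ρ] :
    energy W ρ = 1 / 2 * ∑' k, a k * ‖∫ x, mFourier k x ∂ρ‖ ^ 2 := by
  have hinner : ∀ x, ∫ y, W (x - y) ∂ρ
      = ∑' k, a k * (mFourier k x * conj (∫ y, mFourier k y ∂ρ)).re := by
    intro x
    simp_rw [hW, ← integral_tcos_sub]
    exact integral_tsum_mul_of_abs_le ha (fun k => by fun_prop)
      (fun k y => abs_tcos_le_one k (x - y))
  simp_rw [energy, hinner, ← integral_re_mul_conj_integral_mFourier ρ]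
  congr 1
  refine integral_tsum_mul_of_abs_le ha (fun k => ?_) (C := ρ.real Set.univ) fun k x => ?_
  · exact (Complex.continuous_re.comp
      ((mFourier k).continuous.mul continuous_const)).aestronglyMeasurable
  · calc |(mFourier k x * conj (∫ y, mFourier k y ∂ρ)).re|
        ≤ ‖mFourier k x * conj (∫ y, mFourier k y ∂ρ)‖ := Complex.abs_re_le_norm _
      _ ≤ ρ.real Set.univ := by
        rw [norm_mul, norm_mFourier_apply, Complex.norm_conj, one_mul]
        exact norm_integral_mFourier_le ρ k

theorem energy_volume {W : Torus d → ℝ} {a : (Fin d → ℤ) → ℝ} (ha : Summable fun k => |a k|)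
    (ha0 : a 0 = 0) (hW : ∀ x, W x = ∑' k, a k * tcos k x) : energy W volume = 0 := by
  have hterm : ∀ k, a k * ‖∫ x, mFourier k x‖ ^ 2 = 0 := fun k => by
    rw [integral_mFourier]
    split_ifs with hk <;> simp [hk, ha0]
  simp [energy_eq_tsum ha hW, hterm]

noncomputable def cosineBump (k : Fin d → ℤ) : Measure (Torus d) :=
  volume.withDensity fun x => ENNReal.ofReal (1 + tcos k x)

lemma isProbabilityMeasure_cosineBump {k : Fin d → ℤ} (hk : k ≠ 0) :
    IsProbabilityMeasure (cosineBump k) := by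
  have hint : Integrable (fun x => 1 + tcos k x) :=
    (continuous_const.add (continuous_tcos k)).integrable_of_hasCompactSupport (.of_compactSpace _)
  constructor
  rw [cosineBump, withDensity_apply _ MeasurableSet.univ, Measure.restrict_univ,
    ← ofReal_integral_eq_lintegral_ofReal hint (ae_of_all _ (one_add_tcos_nonneg k)),
    integral_add (integrable_const 1) ((continuous_tcos k).integrable_of_hasCompactSupport
      (.of_compactSpace _)), integral_tcos, if_neg hk]
  simp

lemma integral_cosineBump {E : Type*} [NormedAddCommGroup E] [NormedSpace ℝ E]
    (k : Fin d → ℤ) (g : Torus d → E) :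
    ∫ x, g x ∂(cosineBump k) = ∫ x, (1 + tcos k x) • g x := by
  rw [cosineBump, integral_withDensity_eq_integral_toReal_smul (by fun_prop)
    (ae_of_all _ fun _ => ENNReal.ofReal_lt_top)]
  simp_rw [ENNReal.toReal_ofReal (one_add_tcos_nonneg k _)]

lemma integral_mFourier_cosineBump (k l : Fin d → ℤ) :
    ∫ x, mFourier l x ∂(cosineBump k) = (if l = 0 then 1 else 0)
      + ((if l + k = 0 then 1 else 0) + (if l + -k = 0 then 1 else 0)) / 2 := by
  have hpt : ∀ x, (1 + tcos k x) • mFourier l x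
      = mFourier l x + (mFourier (l + k) x + mFourier (l + -k) x) / 2 := fun x => by
    rw [Complex.real_smul, Complex.ofReal_add, ofReal_tcos, mFourier_add, mFourier_add]
    push_cast
    ring
  simp_rw [integral_cosineBump, hpt]
  rw [integral_add (integrable_mFourier l volume) ?_, integral_div,
    integral_add (integrable_mFourier _ volume) (integrable_mFourier _ volume),
    integral_mFourier, integral_mFourier, integral_mFourier]
  exact ((integrable_mFourier _ volume).add (integrable_mFourier _ volume)).div_const 2

theorem energy_cosineBump {W : Torus d → ℝ} {a : (Fin d → ℤ) → ℝ} (ha : Summable fun k => |a k|)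
    (ha_symm : ∀ k, a (-k) = a k) (ha0 : a 0 = 0) (hW : ∀ x, W x = ∑' k, a k * tcos k x)
    {k : Fin d → ℤ} (hk : k ≠ 0) : energy W (cosineBump k) = a k / 4 := by
  have := isProbabilityMeasure_cosineBump hk
  have hkk : k ≠ -k := fun h => hk (self_eq_neg.mp h)
  rw [energy_eq_tsum ha hW, tsum_eq_sum (s := {k, -k}), Finset.sum_pair hkk]
  · simp only [integral_mFourier_cosineBump, hk, hkk, hkk.symm, add_eq_zero_iff_eq_neg,
      neg_eq_zero, neg_neg, add_neg_cancel, neg_add_cancel, ↓reduceIte, zero_add, add_zero,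
      one_div, norm_inv, Complex.norm_ofNat, ha_symm]
    ring
  · intro l hl
    simp only [Finset.mem_insert, Finset.mem_singleton, not_or] at hl
    rcases eq_or_ne l 0 with rfl | hl0
    · simp [ha0]
    · simp [integral_mFourier_cosineBump, add_eq_zero_iff_eq_neg, hl.1, hl.2, hl0]

end Torus

theorem stmt15_general {d : ℕ} (W : Torus d → ℝ)
    (a : (Fin d → ℤ) → ℝ) (ha_symm : ∀ k, a (-k) = a k) (ha0 : a 0 = 0)
    (ha_sum : Summable (fun k : Fin d → ℤ => |a k|))
    (hser : ∀ x, W x = ∑' k : Fin d → ℤ, a k * tcos k x) :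
    (∀ ρ : Measure (Torus d), IsProbabilityMeasure ρ →
        energy W (volume : Measure (Torus d)) ≤ energy W ρ)
      ↔ ∀ k : Fin d → ℤ, 0 ≤ a k := by
  rw [energy_volume ha_sum ha0 hser]
  refine ⟨fun hmin k => ?_, fun ha ρ _ => ?_⟩
  · rcases eq_or_ne k 0 with rfl | hk
    · exact ha0.ge
    · have hbump := hmin _ (isProbabilityMeasure_cosineBump hk)
      rw [energy_cosineBump ha_sum ha_symm ha0 hser hk] at hbump
      linarith
  · rw [energy_eq_tsum ha_sum hser]
    exact mul_nonneg (by norm_num) (tsum_nonneg fun k => mul_nonneg (ha k) (sq_nonneg _))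

/-- Proposition A.2: for `W(x) = Σ_k a_k cos(2π k·x)` with `a_k = a_{-k}`, `a_0 = 0` and
`Σ_k |a_k| < ∞`, the Haar probability measure is a global minimizer of the pairwise energy
over probability measures if and only if `a_k ≥ 0` for all `k`. -/
theorem stmt15 {d : ℕ} (W : Torus d → ℝ) (hWc : Continuous W) (hWsymm : ∀ x, W (-x) = W x)
    (a : (Fin d → ℤ) → ℝ) (ha_symm : ∀ k, a (-k) = a k) (ha0 : a 0 = 0)
    (ha_sum : Summable (fun k : Fin d → ℤ => |a k|))
    (hser : ∀ x, W x = ∑' k : Fin d → ℤ, a k * tcos k x) :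
    (∀ ρ : Measure (Torus d), IsProbabilityMeasure ρ →
        energy W (volume : Measure (Torus d)) ≤ energy W ρ)
      ↔ ∀ k : Fin d → ℤ, 0 ≤ a k :=
  stmt15_general W a ha_symm ha0 ha_sum hser
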